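/- arXiv:2410.07395 — 4 statements merged into one kernel-verified Lean document; each statement's English description precedes it below -/
import Mathlib

section
/- Let h* minimize ε_Q over a hypothesis class H and let ĥ minimize the α-weighted empirical error. If for all h ∈ H we have |ε_α(h) − ε̂_α(h)| ≤ η, then ε_Q(ĥ) ≤ ε_Q(h*) + 2η + 2(1−α)·sup_{h∈H} |ε_P(h) − ε_Q(h)|. -/
open MeasureTheory ProbabilityTheory

noncomputable def err {X : Type*} [MeasurableSpace X]
    (P : Measure (X × Bool)) (h : X → Bool) : ℝ :=
  (P {p | h p.1 ≠ p.2}).toReal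

noncomputable def dis {X : Type*} [MeasurableSpace X]
    (P : Measure (X × Bool)) (h h' : X → Bool) : ℝ :=
  (P {p | h p.1 ≠ h' p.1}).toReal

noncomputable def disX {X : Type*} [MeasurableSpace X]
    (μ : Measure X) (h h' : X → Bool) : ℝ :=
  (μ {x | h x ≠ h' x}).toReal

/-- The HΔH-distance between two marginal distributions with respect to class `H`. -/
noncomputable def dHH {X : Type*} [MeasurableSpace X]
    (H : Set (X → Bool)) (μ ν : Measure X) : ℝ :=
  2 * ⨆ p : H × H, |disX μ p.1.1 p.2.1 - disX ν p.1.1 p.2.1|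

theorem weighted_erm_excess_risk {X : Type*} [MeasurableSpace X]
    (P Q : Measure (X × Bool)) [IsProbabilityMeasure P] [IsProbabilityMeasure Q]
    (H : Set (X → Bool)) (α : ℝ) (hα : α ∈ Set.Icc (0:ℝ) 1)
    (hatε : (X → Bool) → ℝ) (η : ℝ) (hη : 0 ≤ η)
    (hstar hhat : X → Bool) (hstarH : hstar ∈ H) (hhatH : hhat ∈ H)
    (hstar_opt : ∀ h ∈ H, err Q hstar ≤ err Q h)
    (hhat_opt : ∀ h ∈ H, hatε hhat ≤ hatε h)
    (hunif : ∀ h ∈ H, |(α * err Q h + (1 - α) * err P h) - hatε h| ≤ η) :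
    err Q hhat ≤ err Q hstar + 2 * η
      + 2 * (1 - α) * ⨆ h : H, |err P h.1 - err Q h.1| := by

  obtain ⟨hα0, hα1⟩ := hα
  have h1α : (0:ℝ) ≤ 1 - α := by linarith
  have errle : ∀ (μ : Measure (X × Bool)) [IsProbabilityMeasure μ] (h : X → Bool),
      0 ≤ err μ h ∧ err μ h ≤ 1 := by
    intro μ _ h
    refine ⟨ENNReal.toReal_nonneg, ?_⟩
    have h1 : μ {p | h p.1 ≠ p.2} ≤ 1 := prob_le_one
    have := ENNReal.toReal_mono (by norm_num) h1
    simpa [err] using this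
  set S := ⨆ h : H, |err P h.1 - err Q h.1| with hS
  have hbdd : BddAbove (Set.range fun h : H => |err P h.1 - err Q h.1|) := by
    refine ⟨2, ?_⟩
    rintro x ⟨h, rfl⟩
    have hP := errle P h.1
    have hQ := errle Q h.1
    rw [abs_le]; constructor <;> [linarith [hP.1, hQ.2]; linarith [hP.2, hQ.1]]
  have hSle : ∀ h ∈ H, |err P h - err Q h| ≤ S := fun h hH =>
    le_ciSup hbdd ⟨h, hH⟩
  have h1 := hunif hhat hhatH
  have h2 := hunif hstar hstarH
  have h3 := hhat_opt hstar hstarH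
  have h4 := hSle hhat hhatH
  have h5 := hSle hstar hstarH
  rw [abs_le] at h1 h2 h4 h5
  nlinarith [mul_le_mul_of_nonneg_left h4.2 h1α, mul_le_mul_of_nonneg_left h5.2 h1α,
    mul_le_mul_of_nonneg_left h4.1 h1α, mul_le_mul_of_nonneg_left h5.1 h1α]
end

section
/- For any classifier h and any reference classifier h', and distributions P, Q on X × {0,1}: |ε_P(h) − ε_Q(h)| ≤ (ε_P(h') + ε_Q(h')) + |dis_P(h,h') − dis_Q(h,h')|, where dis_P(h,h') = P{h(X) ≠ h'(X)}. (Key step in the Ben-David et al. domain adaptation bound, using |ε_P(h) − dis_P(h,h')| ≤ ε_P(h').) -/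
open MeasureTheory ProbabilityTheory

private lemma toReal_le_add {X : Type*} [MeasurableSpace X]
    (P : Measure (X × Bool)) [IsProbabilityMeasure P]
    {A B C : Set (X × Bool)} (hsub : A ⊆ B ∪ C) :
    (P A).toReal ≤ (P B).toReal + (P C).toReal := by
  rw [← ENNReal.toReal_add (measure_ne_top P B) (measure_ne_top P C)]
  refine ENNReal.toReal_mono (by
    exact ENNReal.add_ne_top.mpr ⟨measure_ne_top P B, measure_ne_top P C⟩) ?_
  exact le_trans (measure_mono hsub) (measure_union_le B C)

private lemma key {X : Type*} [MeasurableSpace X]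
    (P : Measure (X × Bool)) [IsProbabilityMeasure P] (h h' : X → Bool) :
    |err P h - dis P h h'| ≤ err P h' := by
  rw [abs_sub_le_iff]
  constructor
  · have : (P {p : X × Bool | h p.1 ≠ p.2}).toReal ≤
        (P {p : X × Bool | h p.1 ≠ h' p.1}).toReal +
        (P {p : X × Bool | h' p.1 ≠ p.2}).toReal := by
      apply toReal_le_add
      intro p hp
      by_cases hb : h p.1 = h' p.1
      · right; simp only [Set.mem_setOf_eq] at *; rw [← hb]; exact hp
      · left; exact hb
    unfold err dis; linarith
  · have : (P {p : X × Bool | h p.1 ≠ h' p.1}).toReal ≤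
        (P {p : X × Bool | h p.1 ≠ p.2}).toReal +
        (P {p : X × Bool | h' p.1 ≠ p.2}).toReal := by
      apply toReal_le_add
      intro p hp
      by_cases hb : h p.1 = p.2
      · right; simp only [Set.mem_setOf_eq] at *; rw [← hb]; exact fun e => hp e.symm
      · left; exact hb
    unfold err dis; linarith

theorem err_gap_le_joint_err_add_dis_gap {X : Type*} [MeasurableSpace X]
    (P Q : Measure (X × Bool)) [IsProbabilityMeasure P] [IsProbabilityMeasure Q]
    (h h' : X → Bool) (hm : Measurable h) (hm' : Measurable h') :
    |err P h - err Q h| ≤ (err P h' + err Q h') + |dis P h h' - dis Q h h'| := by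
  have h1 := key P h h'
  have h2 := key Q h h'
  have t1 := abs_sub_le (err P h) (dis P h h') (err Q h)
  have t2 := abs_sub_le (dis P h h') (dis Q h h') (err Q h)
  have h2' : |dis Q h h' - err Q h| ≤ err Q h' := by rwa [abs_sub_comm]
  linarith
end

section
/- For every h ∈ H and distributions P, Q on X × {0,1}: ε_Q(h) ≤ ε_P(h) + (1/2)·d_{HΔH}(P_X, Q_X) + λ, where λ = inf_{h'∈H} (ε_P(h') + ε_Q(h')) and d_{HΔH}(P_X,Q_X) = 2 sup_{g,g'∈H} |P_X{g ≠ g'} − Q_X{g ≠ g'}|, provided the infimum λ is attained in H. -/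
open MeasureTheory ProbabilityTheory

lemma aux_toReal_tri {X : Type*} [MeasurableSpace X] (μ : Measure (X × Bool))
    [IsProbabilityMeasure μ] {A B C : Set (X × Bool)} (hsub : A ⊆ B ∪ C) :
    (μ A).toReal ≤ (μ B).toReal + (μ C).toReal := by
  have h1 : μ A ≤ μ B + μ C := (measure_mono hsub).trans (measure_union_le B C)
  have h2 := ENNReal.toReal_mono (by finiteness) h1
  rwa [ENNReal.toReal_add (measure_ne_top _ _) (measure_ne_top _ _)] at h2

lemma err_tri {X : Type*} [MeasurableSpace X] (μ : Measure (X × Bool))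
    [IsProbabilityMeasure μ] (f g : X → Bool) :
    err μ f ≤ err μ g + dis μ f g := by
  apply aux_toReal_tri
  intro p hp
  by_cases hg : g p.1 = p.2
  · right; simp only [Set.mem_setOf_eq] at *; intro hfg; exact hp (hfg.trans hg)
  · left; exact hg

lemma dis_tri {X : Type*} [MeasurableSpace X] (μ : Measure (X × Bool))
    [IsProbabilityMeasure μ] (f g : X → Bool) :
    dis μ f g ≤ err μ f + err μ g := by
  apply aux_toReal_tri
  intro p hp
  by_cases hf : f p.1 = p.2
  · right; simp only [Set.mem_setOf_eq] at *; intro hg; exact hp (hf.trans hg.symm)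
  · left; exact hf

lemma dis_eq_disX {X : Type*} [MeasurableSpace X] (μ : Measure (X × Bool))
    {f g : X → Bool} (hf : Measurable f) (hg : Measurable g) :
    dis μ f g = disX (Measure.map Prod.fst μ) f g := by
  unfold dis disX
  rw [Measure.map_apply measurable_fst]
  · rfl
  · exact (measurableSet_eq_fun hf hg).compl

lemma disX_le_one {X : Type*} [MeasurableSpace X] (μ : Measure X)
    [IsProbabilityMeasure μ] (f g : X → Bool) : disX μ f g ≤ 1 :=
  ENNReal.toReal_le_of_le_ofReal one_pos.le (by simpa using prob_le_one)

lemma disX_nonneg {X : Type*} [MeasurableSpace X] (μ : Measure X)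
    (f g : X → Bool) : 0 ≤ disX μ f g := ENNReal.toReal_nonneg

theorem target_err_le_source_err_add_dHH_add_lambda {X : Type*} [MeasurableSpace X]
    (P Q : Measure (X × Bool)) [IsProbabilityMeasure P] [IsProbabilityMeasure Q]
    (H : Set (X → Bool)) (hne : H.Nonempty) (hmeas : ∀ h ∈ H, Measurable h)
    (hstar : X → Bool) (hstarH : hstar ∈ H)
    (hstar_opt : ∀ h' ∈ H, err P hstar + err Q hstar ≤ err P h' + err Q h') :
    ∀ h ∈ H,
      err Q h ≤ err P h
        + (1 / 2) * dHH H (Measure.map Prod.fst P) (Measure.map Prod.fst Q)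
        + (err P hstar + err Q hstar) := by
  intro h hH
  set μP := Measure.map Prod.fst P with hμP
  set μQ := Measure.map Prod.fst Q with hμQ
  haveI : IsProbabilityMeasure μP := Measure.isProbabilityMeasure_map measurable_fst.aemeasurable
  haveI : IsProbabilityMeasure μQ := Measure.isProbabilityMeasure_map measurable_fst.aemeasurable
  have h1 : err Q h ≤ err Q hstar + dis Q h hstar := err_tri Q h hstar
  have h2 : dis P h hstar ≤ err P h + err P hstar := dis_tri P h hstar
  have hbdd : BddAbove (Set.range fun p : H × H =>
      |disX μP p.1.1 p.2.1 - disX μQ p.1.1 p.2.1|) := by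
    refine ⟨1, ?_⟩
    rintro x ⟨p, rfl⟩
    rw [abs_sub_le_iff]
    constructor <;>
      nlinarith [disX_le_one μP p.1.1 p.2.1, disX_le_one μQ p.1.1 p.2.1,
        disX_nonneg μP (p.1.1 : X → Bool) p.2.1, disX_nonneg μQ (p.1.1 : X → Bool) p.2.1]
  have h3 : |disX μP h hstar - disX μQ h hstar| ≤
      ⨆ p : H × H, |disX μP p.1.1 p.2.1 - disX μQ p.1.1 p.2.1| :=
    le_ciSup hbdd ((⟨h, hH⟩, ⟨hstar, hstarH⟩) : H × H)
  have h4 : dis Q h hstar ≤ dis P h hstar +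
      ⨆ p : H × H, |disX μP p.1.1 p.2.1 - disX μQ p.1.1 p.2.1| := by
    rw [dis_eq_disX Q (hmeas h hH) (hmeas hstar hstarH),
        dis_eq_disX P (hmeas h hH) (hmeas hstar hstarH)]
    have := neg_abs_le (disX μP h hstar - disX μQ h hstar)
    linarith
  have hd : (1 / 2) * dHH H μP μQ =
      ⨆ p : H × H, |disX μP p.1.1 p.2.1 - disX μQ p.1.1 p.2.1| := by
    unfold dHH; ring
  rw [hd]
  linarith
end

section
/- Cross-domain excess risk transfer: let h* ∈ H attain λ = inf_{h∈H}(ε_P(h)+ε_Q(h)). Then for any h ∈ H, ε_Q(h) − inf_{g∈H} ε_Q(g) ≤ (ε_P(h) − inf_{g∈H} ε_P(g)) + d_{HΔH}(P_X, Q_X) + 2λ, where d_{HΔH}(P_X,Q_X) = 2 sup_{g,g'∈H}|P_X{g≠g'} − Q_X{g≠g'}|. -/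
open MeasureTheory ProbabilityTheory

lemma measSet_ne {X : Type*} [MeasurableSpace X] {h h' : X → Bool}
    (mh : Measurable h) (mh' : Measurable h') :
    MeasurableSet {x | h x ≠ h' x} :=
  (measurableSet_eq_fun mh mh').compl

lemma toReal_tri {X : Type*} [MeasurableSpace X]
    (μ : Measure X) [IsProbabilityMeasure μ] {s a b : Set X}
    (hsub : s ⊆ a ∪ b) :
    (μ s).toReal ≤ (μ a).toReal + (μ b).toReal := by
  have h1 : μ s ≤ μ a + μ b := le_trans (measure_mono hsub) (measure_union_le a b)
  have ha := measure_ne_top μ a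
  have hb := measure_ne_top μ b
  calc (μ s).toReal ≤ (μ a + μ b).toReal := by
        exact ENNReal.toReal_mono (by finiteness) h1
    _ = (μ a).toReal + (μ b).toReal := ENNReal.toReal_add ha hb

lemma toReal_prob_le_one {X : Type*} [MeasurableSpace X]
    (μ : Measure X) [IsProbabilityMeasure μ] (s : Set X) :
    (μ s).toReal ≤ 1 := by
  have := prob_le_one (μ := μ) (s := s)
  simpa using ENNReal.toReal_mono (by simp) this

theorem cross_domain_excess_risk_transfer {X : Type*} [MeasurableSpace X]
    (P Q : Measure (X × Bool)) [IsProbabilityMeasure P] [IsProbabilityMeasure Q]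
    (H : Set (X → Bool)) (hne : H.Nonempty) (hmeas : ∀ h ∈ H, Measurable h)
    (hstar : X → Bool) (hstarH : hstar ∈ H)
    (hstar_opt : ∀ h ∈ H, err P hstar + err Q hstar ≤ err P h + err Q h) :
    ∀ h ∈ H,
      err Q h - (⨅ g : H, err Q g.1) ≤
        (err P h - (⨅ g : H, err P g.1))
        + dHH H (Measure.map Prod.fst P) (Measure.map Prod.fst Q)
        + 2 * (err P hstar + err Q hstar) := by
  intro h hH
  set μP := Measure.map (Prod.fst : X × Bool → X) P with hμP
  set μQ := Measure.map (Prod.fst : X × Bool → X) Q with hμQ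
  haveI : IsProbabilityMeasure μP := Measure.isProbabilityMeasure_map measurable_fst.aemeasurable
  haveI : IsProbabilityMeasure μQ := Measure.isProbabilityMeasure_map measurable_fst.aemeasurable
  have mh := hmeas h hH
  have mhs := hmeas hstar hstarH
  -- marginal identities
  have hdisP : disX μP h hstar = dis P h hstar := by
    rw [disX, dis, hμP, Measure.map_apply measurable_fst (measSet_ne mh mhs)]
    rfl
  have hdisQ : disX μQ h hstar = dis Q h hstar := by
    rw [disX, dis, hμQ, Measure.map_apply measurable_fst (measSet_ne mh mhs)]
    rfl
  -- triangle inequalities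
  have f1 : err Q h ≤ err Q hstar + dis Q h hstar := by
    apply toReal_tri
    intro p hp
    by_cases hc : hstar p.1 = p.2
    · right; exact fun e => hp (e.trans hc)
    · left; exact hc
  have f3 : dis P h hstar ≤ err P h + err P hstar := by
    apply toReal_tri
    intro p hp
    by_cases hc : h p.1 = p.2
    · right; exact fun e => hp (hc.trans e.symm)
    · left; exact hc
  -- sup bound
  have bdd : BddAbove (Set.range fun p : H × H =>
      |disX μP p.1.1 p.2.1 - disX μQ p.1.1 p.2.1|) := by
    refine ⟨1, ?_⟩
    rintro _ ⟨p, rfl⟩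
    have h1 : 0 ≤ disX μP p.1.1 p.2.1 := ENNReal.toReal_nonneg
    have h2 : 0 ≤ disX μQ p.1.1 p.2.1 := ENNReal.toReal_nonneg
    have h3 : disX μP p.1.1 p.2.1 ≤ 1 := toReal_prob_le_one μP _
    have h4 : disX μQ p.1.1 p.2.1 ≤ 1 := toReal_prob_le_one μQ _
    rw [abs_le]; constructor <;> linarith
  have hsup : |disX μP h hstar - disX μQ h hstar| ≤
      ⨆ p : H × H, |disX μP p.1.1 p.2.1 - disX μQ p.1.1 p.2.1| :=
    le_ciSup bdd ((⟨h, hH⟩ : H), (⟨hstar, hstarH⟩ : H))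
  have f2 : dis Q h hstar ≤ dis P h hstar + dHH H μP μQ / 2 := by
    have : dis Q h hstar - dis P h hstar ≤ |disX μP h hstar - disX μQ h hstar| := by
      rw [hdisP, hdisQ, abs_sub_comm]
      exact le_abs_self _
    rw [dHH]; linarith
  have hd0 : 0 ≤ dHH H μP μQ := by
    have := le_trans (abs_nonneg _) hsup
    rw [dHH]; linarith
  -- inf bounds
  have f4 : (⨅ g : H, err P g.1) ≤ err P hstar := by
    have : BddBelow (Set.range fun g : H => err P g.1) :=
      ⟨0, by rintro _ ⟨g, rfl⟩; exact ENNReal.toReal_nonneg⟩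
    exact ciInf_le this (⟨hstar, hstarH⟩ : H)
  have f5 : (0 : ℝ) ≤ ⨅ g : H, err Q g.1 := by
    haveI : Nonempty H := hne.to_subtype
    exact le_ciInf fun g => ENNReal.toReal_nonneg
  have f6 : (0 : ℝ) ≤ err Q hstar := ENNReal.toReal_nonneg
  linarith
end
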